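/- arXiv:2307.15197 — 7 statements merged into one kernel-verified Lean document; each statement's English description precedes it below -/
import Mathlib

section
/- Let n ≥ 2 and let F be an n×n real column-stochastic matrix with block form F = [[F₁₁, 0],[cᵀ, 1]], where F₁₁ is a nonnegative (n−1)×(n−1) matrix, c ∈ ℝ^{n−1} is nonnegative with c ≠ 0, the column-stochasticity condition reads c_j + ∑_i (F₁₁)_{ij} = 1 for each j, and F₁₁ is irreducible. Then I − F₁₁ is invertible and F^k converges entrywise as k → ∞ to the matrix [[0, 0],[cᵀ (I − F₁₁)^{−1}, 1]], i.e., the upper-left block tends to the zero matrix, the upper-right block is zero, the lower-left row tends to cᵀ (I − F₁₁)^{−1}, and the (n,n) entry is 1. -/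
open Matrix Finset Filter Topology

/-- A nonnegative square matrix is irreducible: every entry of some power is positive. -/
def MatrixIrreducible {m : Type*} [Fintype m] [DecidableEq m] (A : Matrix m m ℝ) : Prop :=
  ∀ i j, ∃ k : ℕ, 1 ≤ k ∧ 0 < (A ^ k) i j

/-!
The column sums `1 ᵥ* A ^ k` of the powers of `A` are the money still circulating among the
first `m` agents after `k` rounds. Since `1 ᵥ* A = 1 - c`, each round removes `c ᵥ* A ^ k ≥ 0`
from them, so the column sums are antitone; irreducibility lets every agent's money reach an
agent with `c i > 0`, so after some `N` rounds every column sum is at most `r < 1`, and then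
`1 ᵥ* A ^ (N * q) ≤ r ^ q`. Hence `A ^ k → 0`. Then
`det (∑_{i<k} A ^ i) * det (1 - A) = det (1 - A ^ k) → 1` forces `1 - A` to be invertible,
`∑_{i<k} A ^ i = (1 - A ^ k) (1 - A)⁻¹ → (1 - A)⁻¹`, and
`F ^ k = [[A ^ k, 0], [cᵀ ∑_{i<k} A ^ i, 1]]`.
-/

section Substochastic

variable {ι : Type*} [Fintype ι] {A : Matrix ι ι ℝ} {c : ι → ℝ}

theorem Matrix.vecMul_mono_of_nonneg (hA : ∀ i j, 0 ≤ A i j) {v w : ι → ℝ} (h : v ≤ w) :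
    v ᵥ* A ≤ w ᵥ* A := fun j =>
  Finset.sum_le_sum fun i _ => mul_le_mul_of_nonneg_right (h i) (hA i j)

theorem Matrix.apply_le_one_vecMul (hA : ∀ i j, 0 ≤ A i j) (i j : ι) : A i j ≤ (1 ᵥ* A) j := by
  simpa [vecMul, dotProduct] using Finset.single_le_sum (fun p _ => hA p j) (mem_univ i)

variable [DecidableEq ι]

theorem one_vecMul_pow_succ (hcol : ∀ j, c j + ∑ i, A i j = 1) (k : ℕ) :
    1 ᵥ* A ^ (k + 1) = 1 ᵥ* A ^ k - c ᵥ* A ^ k := by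
  have hA : 1 ᵥ* A = 1 - c := funext fun j => by
    simp only [vecMul, dotProduct, Pi.one_apply, one_mul, Pi.sub_apply]
    linarith [hcol j]
  rw [pow_succ', ← vecMul_vecMul, hA, sub_vecMul]

theorem antitone_one_vecMul_pow (hA : ∀ i j, 0 ≤ A i j) (hc : ∀ j, 0 ≤ c j)
    (hcol : ∀ j, c j + ∑ i, A i j = 1) : Antitone fun k => 1 ᵥ* A ^ k := by
  refine antitone_nat_of_succ_le fun k => ?_
  rw [one_vecMul_pow_succ hcol]
  have hloss : 0 ≤ c ᵥ* A ^ k := by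
    simpa using vecMul_mono_of_nonneg (pow_apply_nonneg hA k) (show 0 ≤ c from hc)
  exact sub_le_self _ hloss

theorem one_vecMul_pow_succ_lt_one (hA : ∀ i j, 0 ≤ A i j) (hc : ∀ j, 0 ≤ c j)
    (hcol : ∀ j, c j + ∑ i, A i j = 1) {i j : ι} {k : ℕ} (hci : 0 < c i)
    (hk : 0 < (A ^ k) i j) : (1 ᵥ* A ^ (k + 1)) j < 1 := by
  have hle : (1 ᵥ* A ^ k) j ≤ 1 := by
    simpa using antitone_one_vecMul_pow hA hc hcol (Nat.zero_le k) j
  have hpos : 0 < (c ᵥ* A ^ k) j :=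
    (mul_pos hci hk).trans_le <| Finset.single_le_sum
      (fun p _ => mul_nonneg (hc p) (pow_apply_nonneg hA k p j)) (mem_univ i)
  rw [one_vecMul_pow_succ hcol, Pi.sub_apply]
  linarith

theorem eventually_one_vecMul_pow_lt_one (hA : ∀ i j, 0 ≤ A i j) (hc : ∀ j, 0 ≤ c j)
    (hcol : ∀ j, c j + ∑ i, A i j = 1) (hleak : ∀ j, ∃ i k, 0 < c i ∧ 0 < (A ^ k) i j) :
    ∀ᶠ N in atTop, ∀ j, (1 ᵥ* A ^ N) j < 1 := by
  refine eventually_all.2 fun j => ?_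
  obtain ⟨i, k, hci, hk⟩ := hleak j
  filter_upwards [eventually_ge_atTop (k + 1)] with N hN
  exact (antitone_one_vecMul_pow hA hc hcol hN j).trans_lt
    (one_vecMul_pow_succ_lt_one hA hc hcol hci hk)

theorem one_vecMul_pow_mul_le (hA : ∀ i j, 0 ≤ A i j) {N : ℕ} {r : ℝ} (hr : 0 ≤ r)
    (hN : 1 ᵥ* A ^ N ≤ r • 1) (q : ℕ) : 1 ᵥ* A ^ (N * q) ≤ r ^ q • 1 := by
  induction q with
  | zero => simp
  | succ q ih =>
    calc 1 ᵥ* A ^ (N * (q + 1)) = (1 ᵥ* A ^ N) ᵥ* A ^ (N * q) := by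
          rw [vecMul_vecMul, ← pow_add, mul_add_one, add_comm]
      _ ≤ (r • 1) ᵥ* A ^ (N * q) := vecMul_mono_of_nonneg (pow_apply_nonneg hA _) hN
      _ = r • (1 ᵥ* A ^ (N * q)) := smul_vecMul r 1 _
      _ ≤ r • (r ^ q • 1) := smul_le_smul_of_nonneg_left ih hr
      _ = r ^ (q + 1) • 1 := by rw [smul_smul, pow_succ']

theorem tendsto_pow_atTop_nhds_zero_of_forall_leak (hA : ∀ i j, 0 ≤ A i j)
    (hc : ∀ j, 0 ≤ c j) (hcol : ∀ j, c j + ∑ i, A i j = 1)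
    (hleak : ∀ j, ∃ i k, 0 < c i ∧ 0 < (A ^ k) i j) :
    Tendsto (fun k => A ^ k) atTop (𝓝 0) := by
  obtain ⟨N, hN0, hN⟩ :=
    ((eventually_gt_atTop 0).and (eventually_one_vecMul_pow_lt_one hA hc hcol hleak)).exists
  set r := ‖1 ᵥ* A ^ N‖
  have hnonneg : 0 ≤ 1 ᵥ* A ^ N := by
    simpa using vecMul_mono_of_nonneg (pow_apply_nonneg hA N) (zero_le_one' (ι → ℝ))
  have hr1 : r < 1 := (pi_norm_lt_iff one_pos).2 fun j => by
    rw [Real.norm_of_nonneg (hnonneg j)]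
    exact hN j
  have hrN : 1 ᵥ* A ^ N ≤ r • 1 := fun j => by
    simpa using (le_abs_self _).trans (norm_le_pi_norm (1 ᵥ* A ^ N) j)
  have hbound (k : ℕ) (i j : ι) : (A ^ k) i j ≤ r ^ (k / N) :=
    calc (A ^ k) i j ≤ (1 ᵥ* A ^ k) j := apply_le_one_vecMul (pow_apply_nonneg hA k) i j
      _ ≤ (1 ᵥ* A ^ (N * (k / N))) j :=
          antitone_one_vecMul_pow hA hc hcol (Nat.mul_div_le k N) j
      _ ≤ r ^ (k / N) := by
          simpa using one_vecMul_pow_mul_le hA (norm_nonneg _) hrN (k / N) j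
  have hlim : Tendsto (fun k => r ^ (k / N)) atTop (𝓝 0) :=
    (tendsto_pow_atTop_nhds_zero_of_lt_one (norm_nonneg _) hr1).comp
      (Nat.tendsto_div_const_atTop hN0.ne')
  exact tendsto_pi_nhds.2 fun i => tendsto_pi_nhds.2 fun j =>
    squeeze_zero (fun k => pow_apply_nonneg hA k i j) (fun k => hbound k i j) hlim

end Substochastic

section Neumann

variable {n K : Type*} [Fintype n] [DecidableEq n] [Field K] [TopologicalSpace K]
  [IsTopologicalRing K] [T2Space K] {A : Matrix n n K}

theorem Matrix.isUnit_one_sub_of_tendsto_pow (h : Tendsto (fun k => A ^ k) atTop (𝓝 0)) :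
    IsUnit (1 - A) := by
  rw [isUnit_iff_isUnit_det, isUnit_iff_ne_zero]
  intro hdet
  have hlim : Tendsto (fun k => (1 - A ^ k).det) atTop (𝓝 1) := by
    simpa [Function.comp_def] using (continuous_id.matrix_det.tendsto _).comp
      ((tendsto_const_nhds (x := (1 : Matrix n n K))).sub h)
  have hzero (k : ℕ) : (1 - A ^ k).det = 0 := by
    rw [← geom_sum_mul_neg, det_mul, hdet, mul_zero]
  simp only [hzero] at hlim
  exact zero_ne_one (tendsto_nhds_unique tendsto_const_nhds hlim)

theorem Matrix.tendsto_geom_sum_of_tendsto_pow (h : Tendsto (fun k => A ^ k) atTop (𝓝 0)) :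
    Tendsto (fun k => ∑ i ∈ range k, A ^ i) atTop (𝓝 (1 - A)⁻¹) := by
  have hdet := (isUnit_iff_isUnit_det _).1 (isUnit_one_sub_of_tendsto_pow h)
  have hsum (k : ℕ) : ∑ i ∈ range k, A ^ i = (1 - A ^ k) * (1 - A)⁻¹ := by
    rw [← geom_sum_mul_neg, mul_nonsing_inv_cancel_right _ _ hdet]
  simp only [hsum]
  simpa using ((tendsto_const_nhds (x := (1 : Matrix n n K))).sub h).mul_const (1 - A)⁻¹

end Neumann

theorem Matrix.fromBlocks_zero_one_pow {m n R : Type*} [Fintype m] [Fintype n] [DecidableEq m]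
    [DecidableEq n] [Semiring R] (A : Matrix m m R) (C : Matrix n m R) (k : ℕ) :
    fromBlocks A 0 C (1 : Matrix n n R) ^ k =
      fromBlocks (A ^ k) 0 (C * ∑ i ∈ range k, A ^ i) 1 := by
  induction k with
  | zero => simp [fromBlocks_one]
  | succ k ih =>
    rw [pow_succ', ih, fromBlocks_multiply, geom_sum_succ', Matrix.mul_add, ← pow_succ']
    simp

theorem Filter.Tendsto.matrix_fromBlocks {α l m n o R : Type*} [TopologicalSpace R]
    {f : Filter α} {A : α → Matrix n l R} {B : α → Matrix n m R} {C : α → Matrix o l R}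
    {D : α → Matrix o m R} {a : Matrix n l R} {b : Matrix n m R} {c : Matrix o l R}
    {d : Matrix o m R} (hA : Tendsto A f (𝓝 a)) (hB : Tendsto B f (𝓝 b))
    (hC : Tendsto C f (𝓝 c)) (hD : Tendsto D f (𝓝 d)) :
    Tendsto (fun x => fromBlocks (A x) (B x) (C x) (D x)) f (𝓝 (fromBlocks a b c d)) :=
  ((continuous_fst.fst.matrix_fromBlocks continuous_fst.snd continuous_snd.fst
    continuous_snd.snd).tendsto ((a, b), (c, d))).comp
    ((hA.prodMk_nhds hB).prodMk_nhds (hC.prodMk_nhds hD))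

theorem cash_hoarder_limit_general (m : ℕ)
    (A : Matrix (Fin m) (Fin m) ℝ) (c : Fin m → ℝ)
    (hA : ∀ i j, 0 ≤ A i j) (hc : ∀ j, 0 ≤ c j) (hcne : c ≠ 0)
    (hcol : ∀ j, c j + ∑ i, A i j = 1)
    (hirr : MatrixIrreducible A)
    (F : Matrix (Fin m ⊕ Unit) (Fin m ⊕ Unit) ℝ)
    (hF : F = Matrix.fromBlocks A 0 (Matrix.replicateRow Unit c) 1) :
    IsUnit (1 - A) ∧
      Filter.Tendsto (fun k : ℕ => F ^ k) Filter.atTop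
        (nhds (Matrix.fromBlocks 0 0 (Matrix.replicateRow Unit c * (1 - A)⁻¹) 1)) := by
  obtain ⟨i, hci⟩ : ∃ i, 0 < c i := by
    by_contra! h
    exact hcne (funext fun j => le_antisymm (h j) (hc j))
  have hleak (j : Fin m) : ∃ i k, 0 < c i ∧ 0 < (A ^ k) i j :=
    let ⟨k, _, hk⟩ := hirr i j
    ⟨i, k, hci, hk⟩
  have hpow := tendsto_pow_atTop_nhds_zero_of_forall_leak hA hc hcol hleak
  refine ⟨isUnit_one_sub_of_tendsto_pow hpow, ?_⟩
  have hrow : Tendsto (fun k => replicateRow Unit c * ∑ i ∈ range k, A ^ i) atTop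
      (𝓝 (replicateRow Unit c * (1 - A)⁻¹)) :=
    ((continuous_const.matrix_mul continuous_id).tendsto _).comp
      (tendsto_geom_sum_of_tendsto_pow hpow)
  simp only [hF, fromBlocks_zero_one_pow]
  exact hpow.matrix_fromBlocks tendsto_const_nhds hrow tendsto_const_nhds

/-- If the last agent is a pure cash hoarder (`F = [[A,0],[cᵀ,1]]`,
`c ≠ 0`) and the rest of the economy is strongly connected (`A` irreducible),
then `I - A` is invertible and `F^k → [[0,0],[cᵀ(I-A)⁻¹,1]]` entrywise. -/
theorem cash_hoarder_limit (m : ℕ) (hm : 1 ≤ m)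
    (A : Matrix (Fin m) (Fin m) ℝ) (c : Fin m → ℝ)
    (hA : ∀ i j, 0 ≤ A i j) (hc : ∀ j, 0 ≤ c j) (hcne : c ≠ 0)
    (hcol : ∀ j, c j + ∑ i, A i j = 1)
    (hirr : MatrixIrreducible A)
    (F : Matrix (Fin m ⊕ Unit) (Fin m ⊕ Unit) ℝ)
    (hF : F = Matrix.fromBlocks A 0 (Matrix.replicateRow Unit c) 1) :
    IsUnit (1 - A) ∧
      Filter.Tendsto (fun k : ℕ => F ^ k) Filter.atTop
        (nhds (Matrix.fromBlocks 0 0 (Matrix.replicateRow Unit c * (1 - A)⁻¹) 1)) :=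
  cash_hoarder_limit_general m A c hA hc hcne hcol hirr F hF
end

section
/- Let n ≥ 2 and let F be an n×n real column-stochastic matrix with block form F = [[F₁₁, 0],[cᵀ, 1]], where F₁₁ is a nonnegative (n−1)×(n−1) irreducible matrix, c ∈ ℝ^{n−1} is nonnegative with c ≠ 0, and c_j + ∑_i (F₁₁)_{ij} = 1 for each j. Then for every vector x ∈ ℝⁿ, as k → ∞ the last coordinate of F^k x converges to the total sum ∑_{i=1}^n x_i, and every other coordinate of F^k x converges to 0. (In particular, the pure cash hoarder asymptotically absorbs the entire monetary base of the economy.) -/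
/-!
The first `m` agents never receive money back from the hoarder, so the top block of `F ^ k x`
is `A ^ k` applied to the top block of `x`. The matrix `A` is column-substochastic, and
irreducibility carries the leak at a column with `c j₀ > 0` to every column: some power of `A`
has all column sums `< 1`, hence column sums of `A ^ k` decay geometrically and `A ^ k → 0`.
Since `F` is column-stochastic it preserves the total `∑ i, x i`, which therefore ends up in
the last coordinate.
-/

open Matrix Finset Filter Topology

namespace Matrix

section OrderedSemiring

variable {R m n : Type*} [Semiring R] [PartialOrder R] [IsOrderedRing R] [Fintype m]

lemma vecMul_le_vecMul_of_nonneg {M : Matrix m n R} (hM : ∀ i j, 0 ≤ M i j) {v w : m → R}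
    (hvw : v ≤ w) : v ᵥ* M ≤ w ᵥ* M :=
  fun j => dotProduct_le_dotProduct_of_nonneg_right hvw fun i => hM i j

lemma fromBlocks_mem_colStochastic [DecidableEq m] {A : Matrix m m R} {c : m → R} (hA : ∀ i j, 0 ≤ A i j)
    (hc : ∀ j, 0 ≤ c j) (hcol : ∀ j, c j + ∑ i, A i j = 1) :
    fromBlocks A 0 (replicateRow Unit c) 1 ∈ colStochastic R (m ⊕ Unit) := by
  refine mem_colStochastic_iff_sum.2 ⟨?_, ?_⟩
  · rintro (i | i) (j | j) <;> simp [hA, hc]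
  · rintro (j | j)
    · simp [Fintype.sum_sum_type, add_comm, hcol]
    · simp [Fintype.sum_sum_type]

end OrderedSemiring

lemma fromBlocks_zero_pow_mulVec_comp_inl {R m n : Type*} [Semiring R] [Fintype m] [Fintype n]
    [DecidableEq m] [DecidableEq n] (A : Matrix m m R) (C : Matrix n m R) (D : Matrix n n R)
    (x : m ⊕ n → R) (k : ℕ) :
    (fromBlocks A 0 C D ^ k *ᵥ x) ∘ Sum.inl = A ^ k *ᵥ (x ∘ Sum.inl) := by
  induction k with
  | zero => simp
  | succ k ih =>
    rw [pow_succ', ← mulVec_mulVec, fromBlocks_mulVec, Sum.elim_comp_inl, zero_mulVec, add_zero,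
      ih, mulVec_mulVec, pow_succ']

section Substochastic

variable {n : Type*} [Fintype n] [DecidableEq n] {A : Matrix n n ℝ}

lemma antitone_one_vecMul_pow (hA : ∀ i j, 0 ≤ A i j) (h1 : 1 ᵥ* A ≤ 1) :
    Antitone fun k : ℕ => 1 ᵥ* A ^ k :=
  antitone_nat_of_succ_le fun k => by
    rw [pow_succ', ← vecMul_vecMul]
    simpa using vecMul_le_vecMul_of_nonneg (pow_apply_nonneg hA k) h1

lemma exists_one_vecMul_pow_lt_one (hA : ∀ i j, 0 ≤ A i j) (h1 : 1 ᵥ* A ≤ 1) {j₀ : n}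
    (hj₀ : (1 ᵥ* A) j₀ < 1) (hreach : ∀ j, ∃ k, 0 < (A ^ k) j₀ j) (j : n) :
    ∃ k, (1 ᵥ* A ^ k) j < 1 := by
  obtain ⟨k, hk⟩ := hreach j
  refine ⟨1 + k, ?_⟩
  calc (1 ᵥ* A ^ (1 + k)) j = ∑ l, (1 ᵥ* A) l * (A ^ k) l j := by
        rw [pow_add, pow_one, ← vecMul_vecMul]; rfl
    _ < ∑ l, (A ^ k) l j :=
        sum_lt_sum (fun l _ => mul_le_of_le_one_left (pow_apply_nonneg hA k l j) (h1 l))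
          ⟨j₀, mem_univ _, mul_lt_of_lt_one_left hk hj₀⟩
    _ = (1 ᵥ* A ^ k) j := by simp [vecMul, dotProduct]
    _ ≤ 1 := by simpa using antitone_one_vecMul_pow hA h1 k.zero_le j

lemma one_vecMul_pow_mul_le (hA : ∀ i j, 0 ≤ A i j) {N : ℕ} {θ : ℝ} (hθ : 0 ≤ θ)
    (hN : 1 ᵥ* A ^ N ≤ θ • 1) (p : ℕ) : 1 ᵥ* A ^ (N * p) ≤ θ ^ p • 1 := by
  induction p with
  | zero => simp
  | succ p ih =>
    calc 1 ᵥ* A ^ (N * (p + 1)) = (1 ᵥ* A ^ N) ᵥ* A ^ (N * p) := by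
          rw [mul_add_one, add_comm, pow_add, vecMul_vecMul]
      _ ≤ (θ • 1) ᵥ* A ^ (N * p) := vecMul_le_vecMul_of_nonneg (pow_apply_nonneg hA _) hN
      _ = θ • (1 ᵥ* A ^ (N * p)) := smul_vecMul _ _ _
      _ ≤ θ • (θ ^ p • 1) := smul_le_smul_of_nonneg_left ih hθ
      _ = θ ^ (p + 1) • 1 := by rw [smul_smul, pow_succ']

theorem tendsto_one_vecMul_pow_nhds_zero (hA : ∀ i j, 0 ≤ A i j) (h1 : 1 ᵥ* A ≤ 1)
    (hlt : ∀ j, ∃ k, (1 ᵥ* A ^ k) j < 1) : Tendsto (fun k : ℕ => 1 ᵥ* A ^ k) atTop (𝓝 0) := by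
  have hanti := antitone_one_vecMul_pow hA h1
  obtain ⟨N, hN, hN0⟩ : ∃ N, (∀ j, (1 ᵥ* A ^ N) j < 1) ∧ N ≠ 0 :=
    ((eventually_all.2 fun j => (hlt j).elim fun k hk =>
      eventually_atTop.2 ⟨k, fun l hl => (hanti hl j).trans_lt hk⟩).and
      (eventually_ne_atTop 0)).exists
  -- any `θ` strictly between the largest column sum of `A ^ N` and `1`
  have hθ : ∀ᶠ θ in 𝓝[<] (1 : ℝ), (∀ j, (1 ᵥ* A ^ N) j < θ) ∧ 0 < θ :=
    ((eventually_all.2 fun j => eventually_gt_nhds (hN j)).and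
      (eventually_gt_nhds one_pos)).filter_mono nhdsWithin_le_nhds
  obtain ⟨θ, ⟨hθN, hθ0⟩, hθ1⟩ := (hθ.and self_mem_nhdsWithin).exists
  have hdecay (k : ℕ) : 1 ᵥ* A ^ k ≤ θ ^ (k / N) • 1 :=
    (hanti (Nat.mul_div_le k N)).trans <|
      one_vecMul_pow_mul_le hA hθ0.le (fun j => by simpa using (hθN j).le) _
  have hgeom : Tendsto (fun k : ℕ => θ ^ (k / N)) atTop (𝓝 0) :=
    (tendsto_pow_atTop_nhds_zero_of_lt_one hθ0.le hθ1).comp (Nat.tendsto_div_const_atTop hN0)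
  refine tendsto_pi_nhds.2 fun j =>
    squeeze_zero (fun k => ?_) (fun k => by simpa using hdecay k j) hgeom
  exact dotProduct_nonneg_of_nonneg (fun _ => zero_le_one) fun i => pow_apply_nonneg hA k i j

theorem tendsto_pow_nhds_zero_of_irreducible (hA : ∀ i j, 0 ≤ A i j) (h1 : 1 ᵥ* A ≤ 1)
    {j₀ : n} (hj₀ : (1 ᵥ* A) j₀ < 1) (hirr : MatrixIrreducible A) :
    Tendsto (fun k : ℕ => A ^ k) atTop (𝓝 0) := by
  have hcol := tendsto_pi_nhds.1 <| tendsto_one_vecMul_pow_nhds_zero hA h1 <|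
    exists_one_vecMul_pow_lt_one hA h1 hj₀ fun j => (hirr j₀ j).imp fun _ => And.right
  refine tendsto_pi_nhds.2 fun i => tendsto_pi_nhds.2 fun j =>
    squeeze_zero (fun k => pow_apply_nonneg hA k i j) (fun k => ?_) (hcol j)
  simpa [vecMul, dotProduct] using
    single_le_sum (fun l _ => pow_apply_nonneg hA k l j) (mem_univ i)

end Substochastic

end Matrix

theorem cash_hoarder_absorbs_all_general (m : ℕ)
    (A : Matrix (Fin m) (Fin m) ℝ) (c : Fin m → ℝ)
    (hA : ∀ i j, 0 ≤ A i j) (hc : ∀ j, 0 ≤ c j) (hcne : c ≠ 0)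
    (hcol : ∀ j, c j + ∑ i, A i j = 1)
    (hirr : MatrixIrreducible A)
    (F : Matrix (Fin m ⊕ Unit) (Fin m ⊕ Unit) ℝ)
    (hF : F = Matrix.fromBlocks A 0 (Matrix.replicateRow Unit c) 1)
    (x : Fin m ⊕ Unit → ℝ) :
    Filter.Tendsto (fun k : ℕ => (F ^ k).mulVec x (Sum.inr ()))
        Filter.atTop (nhds (∑ i, x i)) ∧
      ∀ i : Fin m,
        Filter.Tendsto (fun k : ℕ => (F ^ k).mulVec x (Sum.inl i))
          Filter.atTop (nhds 0) := by
  obtain ⟨j₀, hj₀⟩ : ∃ j, 0 < c j := by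
    by_contra! h
    exact hcne (funext fun j => le_antisymm (h j) (hc j))
  have hcolA : 1 ᵥ* A = 1 - c := funext fun j => by
    simp only [vecMul, dotProduct, Pi.one_apply, one_mul, Pi.sub_apply]; linarith [hcol j]
  have hApow := tendsto_pow_nhds_zero_of_irreducible hA (hcolA ▸ sub_le_self 1 hc)
    (by simpa [hcolA] using hj₀) hirr
  have htop (i : Fin m) : Tendsto (fun k : ℕ => (F ^ k *ᵥ x) (Sum.inl i)) atTop (𝓝 0) := by
    have hvec : Tendsto (fun k : ℕ => A ^ k *ᵥ (x ∘ Sum.inl)) atTop (𝓝 0) := by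
      simpa [Function.comp_def] using
        ((continuous_id.matrix_mulVec continuous_const).tendsto 0).comp hApow
    simpa only [hF, ← fromBlocks_zero_pow_mulVec_comp_inl A (replicateRow Unit c) 1 x,
      Function.comp_apply, Pi.zero_apply] using tendsto_pi_nhds.1 hvec i
  have hmass (k : ℕ) : ∑ i, (F ^ k *ᵥ x) i = ∑ i, x i :=
    sum_mulVec_of_mem_colStochastic <| pow_mem (hF ▸ fromBlocks_mem_colStochastic hA hc hcol) k
  refine ⟨?_, htop⟩
  have hlast (k : ℕ) : (F ^ k *ᵥ x) (Sum.inr ()) =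
      ∑ i, x i - ∑ i : Fin m, (F ^ k *ᵥ x) (Sum.inl i) := by
    rw [← hmass k, Fintype.sum_sum_type]; simp
  simpa [hlast] using tendsto_const_nhds.sub (tendsto_finsetSum univ fun i _ => htop i)

/-- With a pure cash hoarder as the last agent and a strongly connected
sub-economy, the last coordinate of `F^k x` converges to the total sum of the
coordinates of `x`, and every other coordinate converges to `0`. -/
theorem cash_hoarder_absorbs_all (m : ℕ) (hm : 1 ≤ m)
    (A : Matrix (Fin m) (Fin m) ℝ) (c : Fin m → ℝ)
    (hA : ∀ i j, 0 ≤ A i j) (hc : ∀ j, 0 ≤ c j) (hcne : c ≠ 0)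
    (hcol : ∀ j, c j + ∑ i, A i j = 1)
    (hirr : MatrixIrreducible A)
    (F : Matrix (Fin m ⊕ Unit) (Fin m ⊕ Unit) ℝ)
    (hF : F = Matrix.fromBlocks A 0 (Matrix.replicateRow Unit c) 1)
    (x : Fin m ⊕ Unit → ℝ) :
    Filter.Tendsto (fun k : ℕ => (F ^ k).mulVec x (Sum.inr ()))
        Filter.atTop (nhds (∑ i, x i)) ∧
      ∀ i : Fin m,
        Filter.Tendsto (fun k : ℕ => (F ^ k).mulVec x (Sum.inl i))
          Filter.atTop (nhds 0) :=
  cash_hoarder_absorbs_all_general m A c hA hc hcne hcol hirr F hF x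
end

section
/- Let G be an n×n real column-stochastic matrix all of whose entries are strictly positive. For each row i set α_i = min_{j} G_{ij}, and let g = ∑_{i=1}^n α_i. Then for every vector u ∈ ℝⁿ with ∑_{j=1}^n u_j = 0, one has ‖G u‖₁ ≤ (1 − g) ‖u‖₁. -/
open Matrix Finset

/-- For a strictly positive column-stochastic matrix `G`, with generosity
coefficients `α_i = min_j G_{ij}` and overall generosity `g = ∑ i, α_i`, every
zero-sum vector `u` satisfies `‖G u‖₁ ≤ (1 - g) ‖u‖₁`. -/
theorem generosity_contraction (n : ℕ) (hn : 0 < n)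
    (G : Matrix (Fin n) (Fin n) ℝ)
    (hpos : ∀ i j, 0 < G i j) (hcol : ∀ j, ∑ i, G i j = 1)
    (α : Fin n → ℝ) (hα : ∀ i, α i = ⨅ j, G i j)
    (g : ℝ) (hg : g = ∑ i, α i)
    (u : Fin n → ℝ) (hu : ∑ j, u j = 0) :
    ∑ i, |G.mulVec u i| ≤ (1 - g) * ∑ i, |u i| := by
  have hle : ∀ i j, α i ≤ G i j := fun i j => by
    rw [hα i]; exact ciInf_le (Set.Finite.bddBelow (Set.finite_range _)) j
  calc ∑ i, |G.mulVec u i|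
      ≤ ∑ i, ∑ j, (G i j - α i) * |u j| := by
        refine Finset.sum_le_sum fun i _ => ?_
        have h1 : G.mulVec u i = ∑ j, (G i j - α i) * u j := by
          simp [Matrix.mulVec, dotProduct, sub_mul, Finset.sum_sub_distrib,
            ← Finset.mul_sum, hu]
        rw [h1]
        refine (Finset.abs_sum_le_sum_abs _ _).trans ?_
        refine Finset.sum_le_sum fun j _ => ?_
        rw [abs_mul, abs_of_nonneg (sub_nonneg.2 (hle i j))]
    _ = (1 - g) * ∑ i, |u i| := by
        rw [Finset.sum_comm, Finset.mul_sum]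
        refine Finset.sum_congr rfl fun j _ => ?_
        rw [← Finset.sum_mul, Finset.sum_sub_distrib, hcol j, ← hg]
end

section
/- Let G be an n×n real column-stochastic matrix all of whose entries are strictly positive, let α_i = min_j G_{ij} for each i, and let g = ∑_{i=1}^n α_i. Then for every vector u ∈ ℝⁿ with ∑_{j=1}^n u_j = 0 and every integer q ≥ 0, one has ‖G^q u‖₁ ≤ (1 − g)^q ‖u‖₁. -/
open Matrix Finset

/-- Iterating the generosity contraction: for a strictly positive
column-stochastic matrix `G` with overall generosity `g = ∑ i, min_j G_{ij}`, every
zero-sum vector `u` satisfies `‖G^q u‖₁ ≤ (1 - g)^q ‖u‖₁` for every `q ≥ 0`. -/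
theorem generosity_contraction_iterated (n : ℕ) (hn : 0 < n)
    (G : Matrix (Fin n) (Fin n) ℝ)
    (hpos : ∀ i j, 0 < G i j) (hcol : ∀ j, ∑ i, G i j = 1)
    (α : Fin n → ℝ) (hα : ∀ i, α i = ⨅ j, G i j)
    (g : ℝ) (hg : g = ∑ i, α i)
    (u : Fin n → ℝ) (hu : ∑ j, u j = 0) :
    ∀ q : ℕ, ∑ i, |(G ^ q).mulVec u i| ≤ (1 - g) ^ q * ∑ i, |u i| := by
  have hne : Nonempty (Fin n) := ⟨⟨0, hn⟩⟩
  have hαle : ∀ i j, α i ≤ G i j := by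
    intro i j
    rw [hα]
    exact ciInf_le (Finite.bddBelow_range _) j
  have hg1 : g ≤ 1 := by
    rw [hg, ← hcol ⟨0, hn⟩]
    exact Finset.sum_le_sum fun i _ => hαle i ⟨0, hn⟩
  have step : ∀ v : Fin n → ℝ, ∑ j, v j = 0 →
      ∑ i, |G.mulVec v i| ≤ (1 - g) * ∑ i, |v i| := by
    intro v hv
    have key : ∀ i, G.mulVec v i = ∑ j, (G i j - α i) * v j := by
      intro i
      simp [Matrix.mulVec, dotProduct, sub_mul, Finset.sum_sub_distrib,
        ← Finset.mul_sum, hv]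
    calc ∑ i, |G.mulVec v i| ≤ ∑ i, ∑ j, (G i j - α i) * |v j| := by
          apply Finset.sum_le_sum
          intro i _
          rw [key i]
          refine (Finset.abs_sum_le_sum_abs _ _).trans ?_
          apply Finset.sum_le_sum
          intro j _
          rw [abs_mul, abs_of_nonneg (sub_nonneg.2 (hαle i j))]
      _ = (1 - g) * ∑ i, |v i| := by
          rw [Finset.sum_comm, Finset.mul_sum]
          apply Finset.sum_congr rfl
          intro j _
          rw [← Finset.sum_mul]
          congr 1
          rw [Finset.sum_sub_distrib, hcol, hg]
  have sumzero : ∀ q : ℕ, ∑ i, (G ^ q).mulVec u i = 0 := by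
    intro q
    induction q with
    | zero => simpa using hu
    | succ q ih =>
      rw [pow_succ', ← Matrix.mulVec_mulVec]
      calc ∑ i, G.mulVec ((G ^ q).mulVec u) i
          = ∑ j, (∑ i, G i j) * (G ^ q).mulVec u j := by
            simp [Matrix.mulVec, dotProduct, Finset.sum_comm (γ := ℝ), Finset.sum_mul]
            rw [Finset.sum_comm]
        _ = 0 := by simp [hcol, ih]
  intro q
  induction q with
  | zero => simp
  | succ q ih =>
    rw [pow_succ', ← Matrix.mulVec_mulVec]
    calc ∑ i, |G.mulVec ((G ^ q).mulVec u) i|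
        ≤ (1 - g) * ∑ i, |(G ^ q).mulVec u i| := step _ (sumzero q)
      _ ≤ (1 - g) * ((1 - g) ^ q * ∑ i, |u i|) :=
          mul_le_mul_of_nonneg_left ih (by linarith)
      _ = (1 - g) ^ (q + 1) * ∑ i, |u i| := by ring
end

section
/- Let F be an n×n real column-stochastic matrix and k₀ ≥ 1 an integer such that every entry of F^{k₀} is strictly positive (F is primitive with exponent at most k₀). Set α_i = min_j (F^{k₀})_{ij}, g = ∑_{i=1}^n α_i, and assume g < 1. Let u ∈ ℝⁿ with ∑_j u_j = 0, and let β = max{ ‖F^r u‖₁ : 0 ≤ r ≤ k₀ − 1 }. Then for every integer k ≥ 0, ‖F^k u‖₁ ≤ (β / (1 − g)^{1 − 1/k₀}) · ((1 − g)^{1/k₀})^k. -/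
/-!
For a zero-sum vector `v`, one may subtract from the `i`-th row of `P = F ^ k₀` its minimum `αᵢ`
without changing `P *ᵥ v`; the shifted matrix is entrywise nonnegative with column sums `1 - g`,
so `P` contracts the `ℓ¹` norm of zero-sum vectors by the factor `1 - g`. Writing
`k = q k₀ + r` with `r < k₀`, this gives `‖F ^ k u‖₁ ≤ (1 - g) ^ q β`, and
`q ≥ (k + 1) / k₀ - 1` turns the integer exponent `q` into the stated real one.
-/

open Matrix Finset

namespace Matrix

variable {ι : Type*} [Fintype ι] {P : Matrix ι ι ℝ}

noncomputable def generosity (P : Matrix ι ι ℝ) : ℝ := ∑ i, ⨅ j, P i j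

lemma sum_mulVec_of_colSum_eq_one (hP : ∀ j, ∑ i, P i j = 1) (v : ι → ℝ) :
    ∑ i, (P *ᵥ v) i = ∑ j, v j := by
  simp only [mulVec, dotProduct]
  rw [Finset.sum_comm]
  exact Finset.sum_congr rfl fun j _ => by rw [← Finset.sum_mul, hP j, one_mul]

lemma colSum_pow_eq_one [DecidableEq ι] (hP : ∀ j, ∑ i, P i j = 1) (m : ℕ) (j : ι) :
    ∑ i, (P ^ m) i j = 1 := by
  induction m generalizing j with
  | zero => classical simp [one_apply]
  | succ m ih =>
    simp only [pow_succ, mul_apply]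
    rw [Finset.sum_comm]
    simp only [← Finset.sum_mul, ih, one_mul, hP j]

lemma iInf_row_le (P : Matrix ι ι ℝ) (i j : ι) : ⨅ j', P i j' ≤ P i j :=
  ciInf_le (Set.finite_range _).bddBelow j

lemma sum_sub_iInf_row (hP : ∀ j, ∑ i, P i j = 1) (j : ι) :
    ∑ i, (P i j - ⨅ j', P i j') = 1 - generosity P := by
  rw [Finset.sum_sub_distrib, hP j, generosity]

lemma generosity_nonneg (hP : ∀ i j, 0 ≤ P i j) : 0 ≤ generosity P :=
  Finset.sum_nonneg fun i _ => by
    have : Nonempty ι := ⟨i⟩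
    exact le_ciInf (hP i)

lemma generosity_le_one (hP : ∀ j, ∑ i, P i j = 1) : generosity P ≤ 1 := by
  cases isEmpty_or_nonempty ι with
  | inl _ => simp [generosity]
  | inr h =>
    obtain ⟨j⟩ := h
    have := sum_sub_iInf_row hP j ▸ Finset.sum_nonneg fun i _ => sub_nonneg.2 (iInf_row_le P i j)
    linarith

lemma sum_abs_mulVec_le (hP : ∀ j, ∑ i, P i j = 1) {v : ι → ℝ} (hv : ∑ j, v j = 0) :
    ∑ i, |(P *ᵥ v) i| ≤ (1 - generosity P) * ∑ i, |v i| := by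
  have hshift : ∀ i, (P *ᵥ v) i = ∑ j, (P i j - ⨅ j', P i j') * v j := fun i => by
    simp only [mulVec, dotProduct, sub_mul, Finset.sum_sub_distrib, ← Finset.mul_sum, hv,
      mul_zero, sub_zero]
  calc ∑ i, |(P *ᵥ v) i|
      ≤ ∑ i, ∑ j, (P i j - ⨅ j', P i j') * |v j| := by
        refine Finset.sum_le_sum fun i _ => (hshift i ▸ Finset.abs_sum_le_sum_abs _ _).trans_eq ?_
        refine Finset.sum_congr rfl fun j _ => ?_
        rw [abs_mul, abs_of_nonneg (sub_nonneg.2 (iInf_row_le P i j))]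
    _ = (1 - generosity P) * ∑ j, |v j| := by
        simp only [Finset.sum_comm (γ := ι), ← Finset.sum_mul, sum_sub_iInf_row hP,
          Finset.mul_sum]

lemma sum_abs_pow_mulVec_le [DecidableEq ι] (hP : ∀ j, ∑ i, P i j = 1) {v : ι → ℝ} (hv : ∑ j, v j = 0)
    (q : ℕ) : ∑ i, |(P ^ q *ᵥ v) i| ≤ (1 - generosity P) ^ q * ∑ i, |v i| := by
  induction q with
  | zero => simp
  | succ q ih =>
    have hsum : ∑ j, (P ^ q *ᵥ v) j = 0 := by
      rw [sum_mulVec_of_colSum_eq_one (colSum_pow_eq_one hP q), hv]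
    rw [pow_succ', ← mulVec_mulVec, pow_succ', mul_assoc]
    exact (sum_abs_mulVec_le hP hsum).trans
      (mul_le_mul_of_nonneg_left ih (sub_nonneg.2 (generosity_le_one hP)))

end Matrix

lemma add_one_div_sub_one_le_div (k : ℕ) {k₀ : ℕ} (hk₀ : 0 < k₀) :
    ((k : ℝ) + 1) / k₀ - 1 ≤ ((k / k₀ : ℕ) : ℝ) := by
  have hk : k + 1 ≤ (k / k₀ + 1) * k₀ := by
    rw [add_mul, one_mul]; exact Nat.lt_div_mul_add hk₀
  rw [sub_le_iff_le_add, div_le_iff₀ (by exact_mod_cast hk₀)]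
  exact_mod_cast hk

lemma pow_div_le_rpow_pow_div_rpow {c : ℝ} (hc0 : 0 < c) (hc1 : c ≤ 1) (k : ℕ) {k₀ : ℕ}
    (hk₀ : 0 < k₀) :
    c ^ (k / k₀) ≤ (c ^ ((1 : ℝ) / k₀)) ^ k / c ^ ((1 : ℝ) - 1 / k₀) := by
  rw [← Real.rpow_natCast _ k, ← Real.rpow_mul hc0.le, ← Real.rpow_sub hc0,
    ← Real.rpow_natCast c (k / k₀)]
  refine Real.rpow_le_rpow_of_exponent_ge hc0 hc1 (le_of_eq_of_le ?_
    (add_one_div_sub_one_le_div k hk₀))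
  ring

/-- The paper's boxed convergence-rate estimate. If `F` is
column-stochastic and `F^{k₀}` is entrywise positive, with overall generosity
`g = ∑ i, min_j (F^{k₀})_{ij} < 1`, then for every zero-sum vector `u`, with
`β = max_{0 ≤ r < k₀} ‖F^r u‖₁`, one has
`‖F^k u‖₁ ≤ (β / (1-g)^{1-1/k₀}) ((1-g)^{1/k₀})^k` for every `k ≥ 0`. -/
theorem cohesive_convergence_rate (n : ℕ)
    (F : Matrix (Fin n) (Fin n) ℝ)
    (hcol : ∀ j, ∑ i, F i j = 1)
    (k₀ : ℕ) (hk₀ : 1 ≤ k₀)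
    (hprim : ∀ i j, 0 < (F ^ k₀) i j)
    (g : ℝ) (hg : g = ∑ i, ⨅ j, (F ^ k₀) i j) (hg1 : g < 1)
    (u : Fin n → ℝ) (hu : ∑ j, u j = 0)
    (β : ℝ)
    (hβ : β = (Finset.range k₀).sup' (Finset.nonempty_range_iff.mpr (by omega))
      (fun r => ∑ i, |(F ^ r).mulVec u i|)) :
    ∀ k : ℕ, ∑ i, |(F ^ k).mulVec u i| ≤
      (β / (1 - g) ^ ((1 : ℝ) - 1 / (k₀ : ℝ))) * ((1 - g) ^ ((1 : ℝ) / (k₀ : ℝ))) ^ k := by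
  intro k
  have hg : g = generosity (F ^ k₀) := hg
  have hg0 : 0 ≤ g := hg ▸ generosity_nonneg fun i j => (hprim i j).le
  set q := k / k₀
  set r := k % k₀
  have hk : F ^ k *ᵥ u = (F ^ k₀) ^ q *ᵥ (F ^ r *ᵥ u) := by
    rw [mulVec_mulVec, ← pow_mul, ← pow_add, Nat.div_add_mod]
  have hsum : ∑ j, (F ^ r *ᵥ u) j = 0 := by
    rw [sum_mulVec_of_colSum_eq_one (colSum_pow_eq_one hcol r), hu]
  have hr : ∑ i, |(F ^ r *ᵥ u) i| ≤ β :=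
    hβ ▸ Finset.le_sup' (fun r => ∑ i, |(F ^ r *ᵥ u) i|) (mem_range.2 (Nat.mod_lt k hk₀))
  calc ∑ i, |(F ^ k *ᵥ u) i|
      ≤ (1 - g) ^ q * ∑ i, |(F ^ r *ᵥ u) i| :=
        hk ▸ hg ▸ sum_abs_pow_mulVec_le (colSum_pow_eq_one hcol k₀) hsum q
    _ ≤ ((1 - g) ^ ((1 : ℝ) / k₀)) ^ k / (1 - g) ^ ((1 : ℝ) - 1 / k₀) * β := by
        gcongr
        exact pow_div_le_rpow_pow_div_rpow (by linarith) (by linarith) k hk₀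
    _ = _ := by ring
end

section
/- Let n > m ≥ 1 and let F be an n×n real column-stochastic matrix, with indices partitioned into the 'wealthy' block W = {1,…,n−m} and the 'poor' block P = {n−m+1,…,n}. Suppose the upper-right block vanishes, i.e., F_{ij} = 0 for all i ∈ W and j ∈ P, the lower-left block is nonzero, i.e., F_{ij} > 0 for some i ∈ P and j ∈ W, and the upper-left block F₁₁ = (F_{ij})_{i,j ∈ W} is irreducible. Then for every x ∈ ℝⁿ and every i ∈ W, the i-th coordinate of F^k x converges to 0 as k → ∞; consequently, for nonnegative x, the total wealth of the poor block, ∑_{i ∈ P} (F^k x)_i, converges to ∑_{i=1}^n x_i. (The poor agents asymptotically end up with all the cash in the economy.) -/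
open Matrix Finset Filter Topology

lemma pow_blocks_aux {p m : ℕ} (F : Matrix (Fin p ⊕ Fin m) (Fin p ⊕ Fin m) ℝ)
    (hF12 : ∀ (i : Fin p) (j : Fin m), F (Sum.inl i) (Sum.inr j) = 0) (k : ℕ) :
    (∀ (i : Fin p) (j : Fin m), (F ^ k) (Sum.inl i) (Sum.inr j) = 0) ∧
    (∀ (i j : Fin p), (F ^ k) (Sum.inl i) (Sum.inl j) = (F.toBlocks₁₁ ^ k) i j) := by
  induction k with
  | zero =>
    constructor
    · intro i j; simp [Matrix.one_apply]
    · intro i j; simp [Matrix.one_apply]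
  | succ k ih =>
    obtain ⟨ih1, ih2⟩ := ih
    constructor
    · intro i j
      rw [pow_succ, Matrix.mul_apply, Fintype.sum_sum_type]
      simp [ih1, hF12]
    · intro i j
      rw [pow_succ, pow_succ, Matrix.mul_apply, Matrix.mul_apply, Fintype.sum_sum_type]
      simp [ih1, ih2]
      rfl

lemma pow_nonneg_aux {n : Type*} [Fintype n] [DecidableEq n] (A : Matrix n n ℝ)
    (hA : ∀ i j, 0 ≤ A i j) (k : ℕ) : ∀ i j, 0 ≤ (A ^ k) i j := by
  induction k with
  | zero => intro i j; simp [Matrix.one_apply]; positivity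
  | succ k ih =>
    intro i j
    rw [pow_succ, Matrix.mul_apply]
    exact Finset.sum_nonneg fun l _ => mul_nonneg (ih i l) (hA l j)


/-- Class-struggle asymptotic in a fragmented society. The wealthy
block `W` (indexed by `Fin p`, `p = n - m`) hires the poor (`F₂₁ ≠ 0`) but the poor
block `P` (indexed by `Fin m`) buys nothing from the wealthy (`F₁₂ = 0`); if the
wealthy sub-economy `F₁₁` is irreducible, then every wealthy coordinate of `F^k x`
tends to `0`, and for nonnegative `x` the total wealth of the poor block tends to
the whole monetary base `∑ i, x i`. -/
theorem poor_absorb_all_wealth (p m : ℕ) (hp : 1 ≤ p) (hm : 1 ≤ m)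
    (F : Matrix (Fin p ⊕ Fin m) (Fin p ⊕ Fin m) ℝ)
    (hF : ∀ i j, 0 ≤ F i j) (hcol : ∀ j, ∑ i, F i j = 1)
    (hF12 : ∀ (i : Fin p) (j : Fin m), F (Sum.inl i) (Sum.inr j) = 0)
    (hF21 : ∃ (i : Fin m) (j : Fin p), 0 < F (Sum.inr i) (Sum.inl j))
    (hirr : MatrixIrreducible (F.toBlocks₁₁)) :
    (∀ (x : Fin p ⊕ Fin m → ℝ) (i : Fin p),
        Filter.Tendsto (fun k : ℕ => (F ^ k).mulVec x (Sum.inl i))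
          Filter.atTop (nhds 0)) ∧
      ∀ x : Fin p ⊕ Fin m → ℝ, (∀ i, 0 ≤ x i) →
        Filter.Tendsto (fun k : ℕ => ∑ i : Fin m, (F ^ k).mulVec x (Sum.inr i))
          Filter.atTop (nhds (∑ i, x i)) := by
  set A := F.toBlocks₁₁ with hAdef
  have hA : ∀ i j, A i j = F (Sum.inl i) (Sum.inl j) := fun i j => rfl
  have hAnn : ∀ i j, 0 ≤ A i j := fun i j => hF _ _
  have hAknn : ∀ k i j, 0 ≤ (A ^ k) i j := fun k => pow_nonneg_aux A hAnn k
  -- column sums of A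
  set σ : Fin p → ℝ := fun j => ∑ i, A i j with hσdef
  have hσ1 : ∀ j, σ j ≤ 1 := by
    intro j
    have h := hcol (Sum.inl j)
    rw [Fintype.sum_sum_type] at h
    have h2 : (0:ℝ) ≤ ∑ i : Fin m, F (Sum.inr i) (Sum.inl j) :=
      Finset.sum_nonneg fun i _ => hF _ _
    simp only [hσdef, hA]
    linarith
  obtain ⟨i0, j0, hij0⟩ := hF21
  have hσ0 : σ j0 < 1 := by
    have h := hcol (Sum.inl j0)
    rw [Fintype.sum_sum_type] at h
    have h2 : F (Sum.inr i0) (Sum.inl j0) ≤ ∑ i : Fin m, F (Sum.inr i) (Sum.inl j0) :=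
      Finset.single_le_sum (fun i _ => hF _ _) (Finset.mem_univ i0)
    simp only [hσdef, hA]
    linarith
  set s : ℕ → Fin p → ℝ := fun k j => ∑ i, (A ^ k) i j with hsdef
  have hsnn : ∀ k j, 0 ≤ s k j := fun k j => Finset.sum_nonneg fun i _ => hAknn k i j
  have hs0 : ∀ j, s 0 j = 1 := by intro j; simp [hsdef, Matrix.one_apply]
  have hprod : ∀ k j, s (k + 1) j = ∑ l, σ l * (A ^ k) l j := by
    intro k j
    simp only [hsdef, hσdef, pow_succ', Matrix.mul_apply]
    rw [Finset.sum_comm]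
    exact Finset.sum_congr rfl fun l _ => (Finset.sum_mul _ _ _).symm
  have hmono : ∀ k j, s (k + 1) j ≤ s k j := by
    intro k j
    rw [hprod]
    calc ∑ l, σ l * (A ^ k) l j ≤ ∑ l, 1 * (A ^ k) l j :=
          Finset.sum_le_sum fun l _ => mul_le_mul_of_nonneg_right (hσ1 l) (hAknn k l j)
      _ = s k j := by simp [hsdef]
  have hmono' : ∀ j, Antitone fun k => s k j := fun j =>
    antitone_nat_of_succ_le fun k => hmono k j
  have hle1 : ∀ k j, s k j ≤ 1 := fun k j => (hs0 j) ▸ hmono' j (Nat.zero_le k)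
  have hstrict : ∀ k j, 0 < (A ^ k) j0 j → s (k + 1) j < 1 := by
    intro k j hpos
    have h1 : s (k + 1) j < s k j := by
      rw [hprod]
      have : ∑ l, σ l * (A ^ k) l j < ∑ l, 1 * (A ^ k) l j := by
        apply Finset.sum_lt_sum
        · exact fun l _ => mul_le_mul_of_nonneg_right (hσ1 l) (hAknn k l j)
        · exact ⟨j0, Finset.mem_univ j0, by nlinarith [hAknn k j0 j]⟩
      calc ∑ l, σ l * (A ^ k) l j < ∑ l, 1 * (A ^ k) l j := this
        _ = s k j := by simp [hsdef]
    exact lt_of_lt_of_le h1 (hle1 k j)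
  -- choose uniform power K
  have hK : ∃ K : ℕ, 1 ≤ K ∧ ∀ j, s K j < 1 := by
    choose kf hkf1 hkfpos using fun j => hirr j0 j
    refine ⟨(Finset.univ.sup kf) + 1, Nat.le_add_left 1 _, fun j => ?_⟩
    have h1 : s (kf j + 1) j < 1 := hstrict (kf j) j (hkfpos j)
    have h2 : kf j + 1 ≤ Finset.univ.sup kf + 1 :=
      Nat.add_le_add_right (Finset.le_sup (Finset.mem_univ j)) 1
    exact lt_of_le_of_lt (hmono' j h2) h1
  obtain ⟨K, hK1, hKlt⟩ := hK
  have hne : (Finset.univ : Finset (Fin p)).Nonempty := ⟨⟨0, hp⟩, Finset.mem_univ _⟩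
  set c : ℝ := Finset.univ.sup' hne (s K) with hcdef
  have hc1 : c < 1 := (Finset.sup'_lt_iff hne).2 fun j _ => hKlt j
  have hc0 : 0 ≤ c := le_trans (hsnn K j0) (Finset.le_sup' (s K) (Finset.mem_univ j0))
  have hcs : ∀ j, s K j ≤ c := fun j => Finset.le_sup' (s K) (Finset.mem_univ j)
  -- geometric decay along multiples of K
  have hgeo : ∀ r j, s (K * r) j ≤ c ^ r := by
    intro r
    induction r with
    | zero => intro j; simpa using (hs0 j).le
    | succ r ih =>
      intro j
      have hpow : A ^ (K * (r + 1)) = A ^ K * A ^ (K * r) := by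
        rw [show K * (r + 1) = K + K * r by ring, pow_add]
      have : s (K * (r + 1)) j = ∑ l, s K l * (A ^ (K * r)) l j := by
        simp only [hsdef, hpow, Matrix.mul_apply]
        rw [Finset.sum_comm]
        exact Finset.sum_congr rfl fun l _ => (Finset.sum_mul _ _ _).symm
      rw [this]
      calc ∑ l, s K l * (A ^ (K * r)) l j
          ≤ ∑ l, c * (A ^ (K * r)) l j :=
            Finset.sum_le_sum fun l _ => mul_le_mul_of_nonneg_right (hcs l) (hAknn _ l j)
        _ = c * s (K * r) j := by rw [← Finset.mul_sum]
        _ ≤ c * c ^ r := mul_le_mul_of_nonneg_left (ih j) hc0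
        _ = c ^ (r + 1) := (pow_succ' c r).symm
  have hskc : ∀ k j, s k j ≤ c ^ (k / K) := by
    intro k j
    have h1 : K * (k / K) ≤ k := by
      rw [mul_comm]; exact Nat.div_mul_le_self k K
    exact le_trans (hmono' j h1) (hgeo (k / K) j)
  have hentry : ∀ k i j, (A ^ k) i j ≤ c ^ (k / K) := by
    intro k i j
    refine le_trans ?_ (hskc k j)
    exact Finset.single_le_sum (fun l _ => hAknn k l j) (Finset.mem_univ i)
  have hdivtop : Tendsto (fun k : ℕ => k / K) atTop atTop := by
    apply tendsto_atTop_atTop.2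
    intro N
    exact ⟨N * K, fun k hk => (Nat.le_div_iff_mul_le hK1).2 hk⟩
  have hcpow : Tendsto (fun k : ℕ => c ^ (k / K)) atTop (nhds 0) :=
    (tendsto_pow_atTop_nhds_zero_of_lt_one hc0 hc1).comp hdivtop
  -- part 1
  have part1 : ∀ (x : Fin p ⊕ Fin m → ℝ) (i : Fin p),
      Tendsto (fun k : ℕ => (F ^ k).mulVec x (Sum.inl i)) atTop (nhds 0) := by
    intro x i
    have hblock := fun k => pow_blocks_aux F hF12 k
    have hval : ∀ k, (F ^ k).mulVec x (Sum.inl i) = ∑ j : Fin p, (A ^ k) i j * x (Sum.inl j) := by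
      intro k
      rw [Matrix.mulVec, dotProduct, Fintype.sum_sum_type]
      have h2 : ∑ j : Fin m, (F ^ k) (Sum.inl i) (Sum.inr j) * x (Sum.inr j) = 0 := by
        apply Finset.sum_eq_zero
        intro j _
        rw [(hblock k).1 i j, zero_mul]
      rw [h2, add_zero]
      exact Finset.sum_congr rfl fun j _ => by rw [(hblock k).2 i j]
    have hg : Tendsto (fun k : ℕ => (∑ j : Fin p, |x (Sum.inl j)|) * c ^ (k / K))
        atTop (nhds 0) := by
      have := hcpow.const_mul (∑ j : Fin p, |x (Sum.inl j)|)
      simpa using this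
    refine squeeze_zero_norm ?_ hg
    · intro k
      rw [hval k, Real.norm_eq_abs]
      calc |∑ j : Fin p, (A ^ k) i j * x (Sum.inl j)|
          ≤ ∑ j : Fin p, |(A ^ k) i j * x (Sum.inl j)| := Finset.abs_sum_le_sum_abs _ _
        _ ≤ ∑ j : Fin p, c ^ (k / K) * |x (Sum.inl j)| := by
            apply Finset.sum_le_sum
            intro j _
            rw [abs_mul, abs_of_nonneg (hAknn k i j)]
            exact mul_le_mul_of_nonneg_right (hentry k i j) (abs_nonneg _)
        _ = (∑ j : Fin p, |x (Sum.inl j)|) * c ^ (k / K) := by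
            rw [← Finset.mul_sum, mul_comm]
  refine ⟨part1, ?_⟩
  -- part 2
  intro x hx
  have hcolk : ∀ (k : ℕ) j, ∑ i, (F ^ k) i j = 1 := by
    intro k
    induction k with
    | zero => intro j; simp [Matrix.one_apply]
    | succ k ih =>
      intro j
      rw [pow_succ']
      simp only [Matrix.mul_apply]
      rw [Finset.sum_comm]
      calc ∑ l, ∑ i, F i l * (F ^ k) l j
          = ∑ l, (∑ i, F i l) * (F ^ k) l j := by
            exact Finset.sum_congr rfl fun l _ => (Finset.sum_mul _ _ _).symm
        _ = ∑ l, (F ^ k) l j := by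
            exact Finset.sum_congr rfl fun l _ => by rw [hcol l, one_mul]
        _ = 1 := ih j
  have htotal : ∀ k : ℕ, ∑ i, (F ^ k).mulVec x i = ∑ i, x i := by
    intro k
    simp only [Matrix.mulVec, dotProduct]
    rw [Finset.sum_comm]
    exact Finset.sum_congr rfl fun j _ => by
      rw [← Finset.sum_mul, hcolk k j, one_mul]
  have hsplit : ∀ k : ℕ, ∑ i : Fin m, (F ^ k).mulVec x (Sum.inr i) =
      (∑ i, x i) - ∑ i : Fin p, (F ^ k).mulVec x (Sum.inl i) := by
    intro k
    have h := htotal k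
    rw [Fintype.sum_sum_type] at h
    linarith
  have hW : Tendsto (fun k : ℕ => ∑ i : Fin p, (F ^ k).mulVec x (Sum.inl i))
      atTop (nhds 0) := by
    have := tendsto_finset_sum (Finset.univ : Finset (Fin p))
      (fun i _ => part1 x i)
    simpa using this
  have := (tendsto_const_nhds (x := ∑ i, x i) (f := atTop (α := ℕ))).sub hW
  rw [sub_zero] at this
  exact this.congr fun k => (hsplit k).symm
end

section
/- Let n > m ≥ 1 and let F be an n×n real column-stochastic matrix, with indices partitioned into the 'wealthy' block W = {1,…,n−m} and the 'poor' block P = {n−m+1,…,n}. Suppose the lower-left block vanishes, i.e., F_{ij} = 0 for all i ∈ P and j ∈ W, the upper-right block is nonzero, i.e., F_{ij} > 0 for some i ∈ W and j ∈ P, and the lower-right block F₂₂ = (F_{ij})_{i,j ∈ P} is irreducible. Then for every x ∈ ℝⁿ and every i ∈ P, the i-th coordinate of F^k x converges to 0 as k → ∞; consequently, for nonnegative x, the total wealth of the wealthy block, ∑_{i ∈ W} (F^k x)_i, converges to ∑_{i=1}^n x_i. (The wealthy agents asymptotically end up with all the cash in the economy.) -/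
/-!
Because `F₂₁ = 0`, the poor coordinates of `F^k x` only see the poor block: they are the
coordinates of `F₂₂^k` applied to the poor part of `x`. The block `F₂₂` is column-substochastic,
and the column `j₀` where `F₁₂` is positive leaks mass to the wealthy. Irreducibility spreads this
leak: once a path leads from `j₀` to a column, that column of some power of `F₂₂` sums to less
than `1`, so for some `N` every column sum of `F₂₂^N` is `< 1`. In the `L¹ → L¹` operator norm
(the `L∞` operator norm of the transpose) this says `‖F₂₂^N‖ < 1`, hence `F₂₂^k → 0`. Since `F`
is column-stochastic, total wealth is conserved, and whatever leaves the poor block ends up with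
the wealthy.
-/

open Matrix Finset Filter Topology

theorem tendsto_pow_atTop_nhds_zero_of_norm_pow_lt_one {R : Type*} [SeminormedRing R] {a : R}
    {N : ℕ} (hN : N ≠ 0) (h : ‖a ^ N‖ < 1) : Tendsto (a ^ ·) atTop (𝓝 0) := by
  have hquot : Tendsto (fun k => (a ^ N) ^ (k / N)) atTop (𝓝 0) :=
    (tendsto_pow_atTop_nhds_zero_of_norm_lt_one h).comp (Nat.tendsto_div_const_atTop hN)
  have hrem : IsBoundedUnder (· ≤ ·) atTop (fun k => ‖a ^ (k % N)‖) :=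
    isBoundedUnder_of ⟨∑ r ∈ range N, ‖a ^ r‖, fun k => single_le_sum
      (fun r _ => norm_nonneg (a ^ r)) (mem_range.2 (Nat.mod_lt k (Nat.pos_of_ne_zero hN)))⟩
  convert hquot.zero_mul_isBoundedUnder_le hrem using 2 with k
  rw [← pow_mul, ← pow_add, Nat.div_add_mod]

theorem MatrixIrreducible.transpose {ι : Type*} [Fintype ι] [DecidableEq ι] {A : Matrix ι ι ℝ}
    (hA : MatrixIrreducible A) : MatrixIrreducible Aᵀ := fun i j => by
  simpa only [← transpose_pow, transpose_apply] using hA j i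

namespace Matrix

theorem mulVec_mono_of_nonneg {m n R : Type*} [Fintype n] [Semiring R] [PartialOrder R]
    [IsOrderedRing R] {M : Matrix m n R} (hM : ∀ i j, 0 ≤ M i j) {v w : n → R} (h : v ≤ w) :
    M *ᵥ v ≤ M *ᵥ w := fun i =>
  sum_le_sum fun j _ => mul_le_mul_of_nonneg_left (h j) (hM i j)

section Substochastic

attribute [local instance] Matrix.linftyOpNormedAddCommGroup Matrix.linftyOpNormedRing

theorem linfty_opNorm_lt_one_of_nonneg {m n : Type*} [Fintype m] [Fintype n] {M : Matrix m n ℝ}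
    (hM : ∀ i j, 0 ≤ M i j) (h : ∀ i, (M *ᵥ 1) i < 1) : ‖M‖ < 1 := by
  rw [linfty_opNorm_def, NNReal.coe_lt_one, Finset.sup_lt_iff zero_lt_one]
  intro i _
  rw [← NNReal.coe_lt_one, NNReal.coe_sum]
  simpa [mulVec, dotProduct, abs_of_nonneg (hM i _)] using h i

variable {ι : Type*} [Fintype ι] [DecidableEq ι] {A : Matrix ι ι ℝ}

theorem antitone_pow_mulVec_one (hA : ∀ i j, 0 ≤ A i j) (hrow : A *ᵥ 1 ≤ 1) :
    Antitone fun k => A ^ k *ᵥ 1 := by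
  refine antitone_nat_of_succ_le fun k => ?_
  rw [pow_succ, ← mulVec_mulVec]
  exact mulVec_mono_of_nonneg (pow_apply_nonneg hA k) hrow

theorem exists_pow_mulVec_one_lt_one (hA : ∀ i j, 0 ≤ A i j) (hrow : A *ᵥ 1 ≤ 1) {i₀ : ι}
    (hi₀ : (A *ᵥ 1) i₀ < 1) (hirr : MatrixIrreducible A) :
    ∃ N ≠ 0, ∀ i, (A ^ N *ᵥ 1) i < 1 := by
  have hanti := antitone_pow_mulVec_one hA hrow
  have hleak : ∀ i, ∃ k, (A ^ (k + 1) *ᵥ 1) i < 1 := by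
    intro i
    obtain ⟨k, -, hk⟩ := hirr i i₀
    refine ⟨k, ?_⟩
    calc (A ^ (k + 1) *ᵥ 1) i = ∑ j, (A ^ k) i j * (A *ᵥ 1) j := by
          rw [pow_succ, ← mulVec_mulVec]; rfl
      _ < ∑ j, (A ^ k) i j * 1 :=
          sum_lt_sum (fun j _ => mul_le_mul_of_nonneg_left (hrow j) (pow_apply_nonneg hA k i j))
            ⟨i₀, mem_univ _, mul_lt_mul_of_pos_left hi₀ hk⟩
      _ = (A ^ k *ᵥ 1) i := rfl
      _ ≤ (A ^ 0 *ᵥ 1) i := hanti (Nat.zero_le k) i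
      _ = 1 := by simp
  choose k hk using hleak
  exact ⟨univ.sup k + 1, Nat.succ_ne_zero _, fun i =>
    (hanti (Nat.succ_le_succ (le_sup (mem_univ i))) i).trans_lt (hk i)⟩

theorem tendsto_pow_of_mulVec_one_le_one (hA : ∀ i j, 0 ≤ A i j) (hrow : A *ᵥ 1 ≤ 1) {i₀ : ι}
    (hi₀ : (A *ᵥ 1) i₀ < 1) (hirr : MatrixIrreducible A) :
    Tendsto (A ^ ·) atTop (𝓝 0) := by
  obtain ⟨N, hN, hlt⟩ := exists_pow_mulVec_one_lt_one hA hrow hi₀ hirr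
  exact tendsto_pow_atTop_nhds_zero_of_norm_pow_lt_one hN
    (linfty_opNorm_lt_one_of_nonneg (pow_apply_nonneg hA N) hlt)

theorem tendsto_pow_of_one_vecMul_le_one (hA : ∀ i j, 0 ≤ A i j) (hcol : 1 ᵥ* A ≤ 1) {j₀ : ι}
    (hj₀ : (1 ᵥ* A) j₀ < 1) (hirr : MatrixIrreducible A) :
    Tendsto (A ^ ·) atTop (𝓝 0) := by
  rw [← mulVec_transpose] at hcol hj₀
  have hT := tendsto_pow_of_mulVec_one_le_one (A := Aᵀ) (fun i j => hA j i) hcol hj₀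
    hirr.transpose
  simpa [Function.comp_def, ← transpose_pow] using
    (continuous_id.matrix_transpose.tendsto 0).comp hT

end Substochastic

section Blocks

variable {n o R : Type*} [Fintype n] [Fintype o]

theorem one_vecMul_toBlocks₂₂_apply [Ring R] {F : Matrix (n ⊕ o) (n ⊕ o) R} (hF : 1 ᵥ* F = 1)
    (j : o) : (1 ᵥ* F.toBlocks₂₂) j = 1 - ∑ i, F (Sum.inl i) (Sum.inr j) := by
  have hcol := congr_fun hF (Sum.inr j)
  simp only [vecMul, dotProduct, Pi.one_apply, one_mul, Fintype.sum_sum_type] at hcol ⊢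
  rw [← hcol, add_sub_cancel_left]
  rfl

theorem one_vecMul_toBlocks₂₂_le_one [DecidableEq n] [DecidableEq o]
    {F : Matrix (n ⊕ o) (n ⊕ o) ℝ} (hF : F ∈ colStochastic ℝ (n ⊕ o)) :
    1 ᵥ* F.toBlocks₂₂ ≤ 1 := fun j => by
  rw [one_vecMul_toBlocks₂₂_apply hF.2, Pi.one_apply, sub_le_self_iff]
  exact sum_nonneg fun i _ => hF.1 _ _

theorem one_vecMul_toBlocks₂₂_lt_one [DecidableEq n] [DecidableEq o]
    {F : Matrix (n ⊕ o) (n ⊕ o) ℝ} (hF : F ∈ colStochastic ℝ (n ⊕ o)) {i : n} {j : o}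
    (hij : 0 < F (Sum.inl i) (Sum.inr j)) : (1 ᵥ* F.toBlocks₂₂) j < 1 := by
  rw [one_vecMul_toBlocks₂₂_apply hF.2, sub_lt_self_iff]
  exact sum_pos' (fun i _ => hF.1 _ _) ⟨i, mem_univ i, hij⟩

theorem mulVec_comp_inr_of_toBlocks₂₁_eq_zero [Semiring R] {F : Matrix (n ⊕ o) (n ⊕ o) R}
    (h : F.toBlocks₂₁ = 0) (x : n ⊕ o → R) :
    (F *ᵥ x) ∘ Sum.inr = F.toBlocks₂₂ *ᵥ (x ∘ Sum.inr) := by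
  conv_lhs => rw [← fromBlocks_toBlocks F, h, fromBlocks_mulVec]
  simp

theorem pow_mulVec_comp_inr_of_toBlocks₂₁_eq_zero [DecidableEq n] [DecidableEq o] [Semiring R]
    {F : Matrix (n ⊕ o) (n ⊕ o) R} (h : F.toBlocks₂₁ = 0) (x : n ⊕ o → R) (k : ℕ) :
    (F ^ k *ᵥ x) ∘ Sum.inr = F.toBlocks₂₂ ^ k *ᵥ (x ∘ Sum.inr) := by
  induction k with
  | zero => simp
  | succ k ih =>
    rw [pow_succ', ← mulVec_mulVec, mulVec_comp_inr_of_toBlocks₂₁_eq_zero h, ih, pow_succ',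
      mulVec_mulVec]

theorem tendsto_pow_mulVec_inr_of_toBlocks₂₁_eq_zero [DecidableEq n] [DecidableEq o]
    [Semiring R] [TopologicalSpace R] [IsTopologicalSemiring R] {F : Matrix (n ⊕ o) (n ⊕ o) R}
    (h : F.toBlocks₂₁ = 0) (hdecay : Tendsto (F.toBlocks₂₂ ^ ·) atTop (𝓝 0)) (x : n ⊕ o → R)
    (i : o) : Tendsto (fun k => (F ^ k *ᵥ x) (Sum.inr i)) atTop (𝓝 0) := by
  have hlim := ((continuous_id.matrix_mulVec (continuous_const (y := x ∘ Sum.inr))).tendsto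
    0).comp hdecay
  rw [id, zero_mulVec] at hlim
  exact (tendsto_pi_nhds.1 hlim i).congr fun k =>
    congr_fun (pow_mulVec_comp_inr_of_toBlocks₂₁_eq_zero h x k).symm i

end Blocks

end Matrix

theorem wealthy_absorb_all_wealth_general (p m : ℕ)
    (F : Matrix (Fin p ⊕ Fin m) (Fin p ⊕ Fin m) ℝ)
    (hF : ∀ i j, 0 ≤ F i j) (hcol : ∀ j, ∑ i, F i j = 1)
    (hF21 : ∀ (i : Fin m) (j : Fin p), F (Sum.inr i) (Sum.inl j) = 0)
    (hF12 : ∃ (i : Fin p) (j : Fin m), 0 < F (Sum.inl i) (Sum.inr j))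
    (hirr : MatrixIrreducible (F.toBlocks₂₂)) :
    (∀ (x : Fin p ⊕ Fin m → ℝ) (i : Fin m),
        Filter.Tendsto (fun k : ℕ => (F ^ k).mulVec x (Sum.inr i))
          Filter.atTop (nhds 0)) ∧
      ∀ x : Fin p ⊕ Fin m → ℝ, (∀ i, 0 ≤ x i) →
        Filter.Tendsto (fun k : ℕ => ∑ i : Fin p, (F ^ k).mulVec x (Sum.inl i))
          Filter.atTop (nhds (∑ i, x i)) := by
  have hstoch : F ∈ colStochastic ℝ (Fin p ⊕ Fin m) := mem_colStochastic_iff_sum.2 ⟨hF, hcol⟩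
  obtain ⟨i₀, j₀, hleak⟩ := hF12
  have hdecay : Tendsto (F.toBlocks₂₂ ^ ·) atTop (𝓝 0) :=
    tendsto_pow_of_one_vecMul_le_one (fun i j => hF _ _) (one_vecMul_toBlocks₂₂_le_one hstoch)
      (one_vecMul_toBlocks₂₂_lt_one hstoch hleak) hirr
  have hpoor := tendsto_pow_mulVec_inr_of_toBlocks₂₁_eq_zero (ext hF21) hdecay
  refine ⟨hpoor, fun x _ => ?_⟩
  have hsplit (k : ℕ) : ∑ i : Fin p, (F ^ k *ᵥ x) (Sum.inl i) =
      ∑ i, x i - ∑ i : Fin m, (F ^ k *ᵥ x) (Sum.inr i) := by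
    rw [eq_sub_iff_add_eq, ← Fintype.sum_sum_type,
      sum_mulVec_of_mem_colStochastic (pow_mem hstoch k)]
  simpa [hsplit] using tendsto_const_nhds.sub (tendsto_finsetSum univ fun i _ => hpoor x i)

/-- The second class-struggle asymptotic in a fragmented society. The
poor block `P` (indexed by `Fin m`) buys from the wealthy block `W` (indexed by
`Fin p`, `p = n - m`), i.e. `F₁₂ ≠ 0`, but the wealthy do not hire the poor at all
(`F₂₁ = 0`); if the poor sub-economy `F₂₂` is irreducible, then every poor coordinate
of `F^k x` tends to `0`, and for nonnegative `x` the total wealth of the wealthy block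
tends to the whole monetary base `∑ i, x i`. -/
theorem wealthy_absorb_all_wealth (p m : ℕ) (hp : 1 ≤ p) (hm : 1 ≤ m)
    (F : Matrix (Fin p ⊕ Fin m) (Fin p ⊕ Fin m) ℝ)
    (hF : ∀ i j, 0 ≤ F i j) (hcol : ∀ j, ∑ i, F i j = 1)
    (hF21 : ∀ (i : Fin m) (j : Fin p), F (Sum.inr i) (Sum.inl j) = 0)
    (hF12 : ∃ (i : Fin p) (j : Fin m), 0 < F (Sum.inl i) (Sum.inr j))
    (hirr : MatrixIrreducible (F.toBlocks₂₂)) :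
    (∀ (x : Fin p ⊕ Fin m → ℝ) (i : Fin m),
        Filter.Tendsto (fun k : ℕ => (F ^ k).mulVec x (Sum.inr i))
          Filter.atTop (nhds 0)) ∧
      ∀ x : Fin p ⊕ Fin m → ℝ, (∀ i, 0 ≤ x i) →
        Filter.Tendsto (fun k : ℕ => ∑ i : Fin p, (F ^ k).mulVec x (Sum.inl i))
          Filter.atTop (nhds (∑ i, x i)) :=
  wealthy_absorb_all_wealth_general p m F hF hcol hF21 hF12 hirr
end
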